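/- arXiv:2510.06515 — 5 statements merged into one kernel-verified Lean document; each statement's English description precedes it below -/
import Mathlib

section
/- (Performance difference lemma.) For any two stationary policies π and π' on a finite discounted MDP and any state s0 ∈ S: V_π(s0) − V_{π'}(s0) = (1/(1−γ)) ∑_{s∈S} μ^{(s0,π)}(s) ∑_{a∈A} π(a|s) A_{π'}(s,a). -/
open Finset

/-- Performance difference lemma: for any two stationary policies `π`, `π'` on a finite
discounted MDP and any state `s0`,
`V_π(s0) − V_{π'}(s0) = (1/(1−γ)) ∑_s μ^{(s0,π)}(s) ∑_a π(a|s) A_{π'}(s,a)`,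
where `A_{π'}(s,a) = Q_{π'}(s,a) − V_{π'}(s)` and
`Q_{π'}(s,a) = r(s,a) + γ ∑_{s'} T(s'|s,a) V_{π'}(s')`. -/
theorem performance_difference_lemma
    {S A : Type*} [Fintype S] [Fintype A] [DecidableEq S] [Nonempty S] [Nonempty A]
    (T : S → A → S → ℝ) (hT0 : ∀ s a s', 0 ≤ T s a s')
    (hT1 : ∀ s a, ∑ s', T s a s' = 1)
    (r : S → A → ℝ) (hr0 : ∀ s a, 0 ≤ r s a) (hr1 : ∀ s a, r s a ≤ 1)
    (γ : ℝ) (hγ0 : 0 < γ) (hγ1 : γ < 1)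
    (π π' : S → A → ℝ)
    (hπ0 : ∀ s a, 0 ≤ π s a) (hπ1 : ∀ s, ∑ a, π s a = 1)
    (hπ'0 : ∀ s a, 0 ≤ π' s a) (hπ'1 : ∀ s, ∑ a, π' s a = 1)
    (s0 : S)
    (V V' : S → ℝ)
    (hV : ∀ s, V s = ∑ a, π s a * (r s a + γ * ∑ s', T s a s' * V s'))
    (hV' : ∀ s, V' s = ∑ a, π' s a * (r s a + γ * ∑ s', T s a s' * V' s'))
    (μ : S → ℝ)
    (hμ : ∀ s, μ s
      = (1 - γ) * (if s = s0 then 1 else 0)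
        + γ * ∑ s', ∑ a, μ s' * π s' a * T s' a s) :
    V s0 - V' s0
      = (1 / (1 - γ)) * ∑ s, μ s * ∑ a, π s a *
          ((r s a + γ * ∑ s', T s a s' * V' s') - V' s) := by
  set W : S → ℝ := fun s => V s - V' s with hW
  set g : S → ℝ := fun s => ∑ a, π s a *
      ((r s a + γ * ∑ s', T s a s' * V' s') - V' s) with hg
  have key : ∀ s, W s = g s + γ * ∑ a, π s a * ∑ s', T s a s' * W s' := by
    intro s
    have hterm : ∀ a ∈ Finset.univ (α := A),
        π s a * ((r s a + γ * ∑ s', T s a s' * V' s') - V' s)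
          + γ * (π s a * ∑ s', T s a s' * W s')
        = π s a * (r s a + γ * ∑ s', T s a s' * V s') - π s a * V' s := by
      intro a _
      have hsplit : ∑ s', T s a s' * W s'
          = (∑ s', T s a s' * V s') - ∑ s', T s a s' * V' s' := by
        rw [← Finset.sum_sub_distrib]
        exact Finset.sum_congr rfl fun s' _ => by simp [hW]; ring
      rw [hsplit]; ring
    have : g s + γ * ∑ a, π s a * ∑ s', T s a s' * W s'
        = ∑ a, (π s a * ((r s a + γ * ∑ s', T s a s' * V' s') - V' s)
            + γ * (π s a * ∑ s', T s a s' * W s')) := by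
      rw [Finset.sum_add_distrib, Finset.mul_sum, hg]
    rw [this, Finset.sum_congr rfl hterm, Finset.sum_sub_distrib,
      ← Finset.sum_mul, hπ1 s, one_mul, ← hV s, hW]
  -- sum against μ
  have step1 : ∑ s, μ s * W s
      = (∑ s, μ s * g s) + γ * ∑ s, ∑ a, ∑ s', μ s * π s a * T s a s' * W s' := by
    have hpt : ∀ s ∈ Finset.univ (α := S), μ s * W s
        = μ s * g s + γ * ∑ a, ∑ s', μ s * π s a * T s a s' * W s' := by
      intro s _
      rw [key s, mul_add]
      congr 1
      simp only [Finset.mul_sum]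
      exact Finset.sum_congr rfl fun a _ =>
        Finset.sum_congr rfl fun s' _ => by ring
    rw [Finset.sum_congr rfl hpt, Finset.sum_add_distrib, ← Finset.mul_sum]
  have hsum : (1 - γ) * W s0 = ∑ s, μ s * g s := by
    have swap : γ * ∑ s, ∑ a, ∑ s', μ s * π s a * T s a s' * W s'
        = ∑ s', (μ s' - (1 - γ) * (if s' = s0 then 1 else 0)) * W s' := by
      have h0 : ∑ s, ∑ a, ∑ s', μ s * π s a * T s a s' * W s'
          = ∑ s, ∑ s', ∑ a, μ s * π s a * T s a s' * W s' :=
        Finset.sum_congr rfl fun s _ => Finset.sum_comm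
      have h1 : ∑ s, ∑ a, ∑ s', μ s * π s a * T s a s' * W s'
          = ∑ s', (∑ s, ∑ a, μ s * π s a * T s a s') * W s' := by
        rw [h0, Finset.sum_comm]
        refine Finset.sum_congr rfl fun s' _ => ?_
        rw [Finset.sum_mul]
        refine Finset.sum_congr rfl fun s _ => ?_
        rw [Finset.sum_mul]
      rw [h1, Finset.mul_sum]
      refine Finset.sum_congr rfl fun s' _ => ?_
      have := hμ s'
      have hμ' : γ * ∑ s, ∑ a, μ s * π s a * T s a s'
          = μ s' - (1 - γ) * (if s' = s0 then 1 else 0) := by linarith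
      rw [← hμ']; ring
    have hsplit : ∑ s', (μ s' - (1 - γ) * (if s' = s0 then 1 else 0)) * W s'
        = ∑ s', (μ s' * W s' - (1 - γ) * (if s' = s0 then 1 else 0) * W s') :=
      Finset.sum_congr rfl fun s' _ => by ring
    have hδ : ∑ s', (1 - γ) * (if s' = s0 then 1 else 0) * W s'
        = (1 - γ) * W s0 := by
      have : ∑ s', (1 - γ) * (if s' = s0 then 1 else 0) * W s'
          = ∑ s', (if s' = s0 then (1 - γ) * W s0 else 0) :=
        Finset.sum_congr rfl fun s' _ => by by_cases h : s' = s0 <;> simp [h]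
      rw [this, Finset.sum_ite_eq' Finset.univ s0, if_pos (Finset.mem_univ s0)]
    rw [swap, hsplit, Finset.sum_sub_distrib, hδ] at step1
    linarith
  have hγne : (1 : ℝ) - γ ≠ 0 := by linarith
  have hfin : (1 - γ) * W s0 = ∑ s, μ s * g s := hsum
  have : W s0 = (1 / (1 - γ)) * ∑ s, μ s * g s := by
    field_simp
    linarith [hfin]
  simpa [hW, hg] using this
end

section
/- (Control in expectation.) Suppose that almost surely, for all t ∈ {1,…,T}, s ∈ S, k ∈ [K]: |𝔼[Ã_t(s,k) | F_{t−1}] − A_{q_tΠ}(s,k)| ≤ ε, and that almost surely, for every s ∈ S: max_{k∈[K]} ∑_{t=1}^T Ã_t(s,k) ≤ B/(1−γ). Then for every fixed (deterministic) state-dependent weight vector q⋆ over [K] and every state s0 ∈ S: V_{q⋆Π}(s0) − (1/T) ∑_{t=1}^T 𝔼[V_{q_tΠ}(s0)] ≤ ε/(1−γ) + B/((1−γ)² T). -/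
open Finset MeasureTheory

/-- The mixture policy `qΠ(a|s) = ∑_k q(k|s) π_k(a|s)` induced by state-dependent weights
`q` over `K` expert policies. -/
noncomputable def mixPolicy {S A : Type*} {K : ℕ}
    (experts : Fin K → S → A → ℝ) (q : S → Fin K → ℝ) : S → A → ℝ :=
  fun s a => ∑ k, q s k * experts k s a

/-- A contraction-style bound: if `f s ≤ C + γ ∑ P s s' f s'` for a row-stochastic `P`
and `0 ≤ γ < 1`, then `f ≤ C / (1-γ)` everywhere. -/
lemma contraction_bound' {S : Type*} [Fintype S] [Nonempty S]
    (P : S → S → ℝ) (hP0 : ∀ s s', 0 ≤ P s s') (hP1 : ∀ s, ∑ s', P s s' = 1)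
    (γ C : ℝ) (hγ0 : 0 ≤ γ) (hγ1 : γ < 1) (f : S → ℝ)
    (hf : ∀ s, f s ≤ C + γ * ∑ s', P s s' * f s') :
    ∀ s, f s ≤ C / (1 - γ) := by
  have hγ' : 0 < 1 - γ := by linarith
  obtain ⟨m, -, hm⟩ := Finset.exists_max_image (Finset.univ : Finset S) f
    ⟨Classical.arbitrary S, Finset.mem_univ _⟩
  have hmax : ∀ s, f s ≤ f m := fun s => hm s (Finset.mem_univ s)
  have h1 : ∑ s', P m s' * f s' ≤ f m := by
    calc ∑ s', P m s' * f s' ≤ ∑ s', P m s' * f m :=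
          Finset.sum_le_sum (fun s' _ => mul_le_mul_of_nonneg_left (hmax s') (hP0 m s'))
      _ = f m := by rw [← Finset.sum_mul, hP1, one_mul]
  have h2 : f m ≤ C + γ * f m := le_trans (hf m) (by nlinarith)
  have h3 : f m ≤ C / (1 - γ) := by rw [le_div_iff₀ hγ']; nlinarith
  exact fun s => le_trans (hmax s) h3

/-- Control in expectation: if the estimated expert advantages `Ã_t(s,k)` have conditional
bias at most `ε` (relative to the true expert advantages of the mixture policies `q_tΠ`), and
almost surely `max_k ∑_t Ã_t(s,k) ≤ B/(1−γ)` for every state `s`, then for every fixed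
state-dependent weight vector `q⋆` and state `s0`,
`V_{q⋆Π}(s0) − (1/T) ∑_t 𝔼[V_{q_tΠ}(s0)] ≤ ε/(1−γ) + B/((1−γ)² T)`. -/
theorem control_in_expectation
    {S A : Type*} [Fintype S] [Fintype A] [Nonempty S] [Nonempty A]
    (T : S → A → S → ℝ) (hT0 : ∀ s a s', 0 ≤ T s a s')
    (hT1 : ∀ s a, ∑ s', T s a s' = 1)
    (r : S → A → ℝ) (hr0 : ∀ s a, 0 ≤ r s a) (hr1 : ∀ s a, r s a ≤ 1)
    (γ : ℝ) (hγ0 : 0 < γ) (hγ1 : γ < 1)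
    (K : ℕ) (hK : 2 ≤ K)
    (experts : Fin K → S → A → ℝ)
    (hexp0 : ∀ k s a, 0 ≤ experts k s a)
    (hexp1 : ∀ k s, ∑ a, experts k s a = 1)
    (Tn : ℕ) (hTn : 0 < Tn)
    {Ω : Type*} {mΩ : MeasurableSpace Ω} (P : Measure Ω) [IsProbabilityMeasure P]
    (F : Filtration ℕ mΩ)
    (ε B : ℝ) (hε : 0 ≤ ε) (hB : 0 < B)
    -- the random state-dependent weights `q_t`, with `q_t` being `F_{t-1}`-measurable
    (q : Fin Tn → Ω → S → Fin K → ℝ)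
    (hq0 : ∀ t ω s k, 0 ≤ q t ω s k) (hq1 : ∀ t ω s, ∑ k, q t ω s k = 1)
    (hqmeas : ∀ t s k, StronglyMeasurable[F t.val] (fun ω => q t ω s k))
    -- the (random) value functions of the mixture policies `q_tΠ`
    (V : Fin Tn → Ω → S → ℝ)
    (hV : ∀ t ω s, V t ω s
      = ∑ a, mixPolicy experts (q t ω) s a * (r s a + γ * ∑ s', T s a s' * V t ω s'))
    (hVint : ∀ t s, Integrable (fun ω => V t ω s) P)
    -- the estimated expert advantages `Ã_t(s,k)`, with `Ã_t` being `F_t`-measurable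
    (Atil : Fin Tn → S → Fin K → Ω → ℝ)
    (hAmeas : ∀ t s k, StronglyMeasurable[F (t.val + 1)] (Atil t s k))
    (hAint : ∀ t s k, Integrable (Atil t s k) P)
    -- conditional bias at most ε
    (hbias : ∀ t s k, ∀ᵐ ω ∂P,
      |(P[Atil t s k | F t.val]) ω -
        (∑ a, experts k s a *
          ((r s a + γ * ∑ s', T s a s' * V t ω s') - V t ω s))| ≤ ε)
    -- almost-sure regret bound on the estimated advantages
    (hregret : ∀ᵐ ω ∂P, ∀ s k, ∑ t, Atil t s k ω ≤ B / (1 - γ))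
    -- a fixed (deterministic) comparison mixture `q⋆Π` and its value function
    (qstar : S → Fin K → ℝ)
    (hqs0 : ∀ s k, 0 ≤ qstar s k) (hqs1 : ∀ s, ∑ k, qstar s k = 1)
    (Vstar : S → ℝ)
    (hVstar : ∀ s, Vstar s
      = ∑ a, mixPolicy experts qstar s a * (r s a + γ * ∑ s', T s a s' * Vstar s'))
    (s0 : S) :
    Vstar s0 - (1 / (Tn : ℝ)) * ∑ t, ∫ ω, V t ω s0 ∂P
      ≤ ε / (1 - γ) + B / ((1 - γ) ^ 2 * Tn) := by
  have hγ' : 0 < 1 - γ := by linarith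
  -- the comparison mixture policy, its basic properties
  set mix : S → A → ℝ := mixPolicy experts qstar with hmixdef
  have hmix0 : ∀ s a, 0 ≤ mix s a := fun s a =>
    Finset.sum_nonneg fun k _ => mul_nonneg (hqs0 s k) (hexp0 k s a)
  have hmix1 : ∀ s, ∑ a, mix s a = 1 := by
    intro s
    rw [hmixdef]
    unfold mixPolicy
    rw [Finset.sum_comm]
    rw [Finset.sum_congr rfl (fun k _ => by rw [← Finset.mul_sum, hexp1, mul_one])]
    exact hqs1 s
  -- the transition kernel induced by the comparison mixture policy
  set Pst : S → S → ℝ := fun s s' => ∑ a, mix s a * T s a s' with hPstdef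
  have hPst0 : ∀ s s', 0 ≤ Pst s s' := fun s s' =>
    Finset.sum_nonneg fun a _ => mul_nonneg (hmix0 s a) (hT0 s a s')
  have hPst1 : ∀ s, ∑ s', Pst s s' = 1 := by
    intro s
    rw [hPstdef]
    simp only
    rw [Finset.sum_comm]
    rw [Finset.sum_congr rfl (fun a _ => by rw [← Finset.mul_sum, hT1, mul_one])]
    exact hmix1 s
  -- the expert-level advantage of `q_tΠ` at `(s,k)`
  set Aexp : Fin Tn → S → Fin K → Ω → ℝ := fun t s k ω =>
    ∑ a, experts k s a * ((r s a + γ * ∑ s', T s a s' * V t ω s') - V t ω s) with hAexpdef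
  -- the advantage of the mixture `q⋆Π` against `q_tΠ`
  set adv : Fin Tn → Ω → S → ℝ := fun t ω s => ∑ k, qstar s k * Aexp t s k ω with hadvdef
  -- integrability facts
  have hAexpint : ∀ t s k, Integrable (Aexp t s k) P := by
    intro t s k
    apply integrable_finset_sum
    intro a _
    exact (((integrable_const (r s a)).add
      ((integrable_finset_sum _ fun s' _ => (hVint t s').const_mul (T s a s')).const_mul γ)).sub
      (hVint t s)).const_mul _
  have hadvint : ∀ t s, Integrable (fun ω => adv t ω s) P := by
    intro t s
    exact integrable_finset_sum _ fun k _ => (hAexpint t s k).const_mul _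
  -- the pointwise performance-difference recursion
  have key : ∀ t ω s, Vstar s - V t ω s
      = adv t ω s + γ * ∑ s', Pst s s' * (Vstar s' - V t ω s') := by
    intro t ω s
    have e1 : ∀ k : Fin K, Aexp t s k ω
        = (∑ a, experts k s a * (r s a + γ * ∑ s', T s a s' * V t ω s')) - V t ω s := by
      intro k
      rw [hAexpdef]
      simp only [mul_sub]
      rw [Finset.sum_sub_distrib, ← Finset.sum_mul, hexp1, one_mul]
    have step1 : adv t ω s
        = (∑ a, mix s a * (r s a + γ * ∑ s', T s a s' * V t ω s')) - V t ω s := by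
      rw [hadvdef]
      simp only
      rw [Finset.sum_congr rfl (fun k _ => by rw [e1 k, mul_sub])]
      rw [Finset.sum_sub_distrib, ← Finset.sum_mul, hqs1, one_mul]
      congr 1
      rw [hmixdef]
      unfold mixPolicy
      simp only [Finset.sum_mul, Finset.mul_sum]
      rw [Finset.sum_comm]
      exact Finset.sum_congr rfl fun a _ => Finset.sum_congr rfl fun k _ => by ring
    have step2 : ∑ s', Pst s s' * (Vstar s' - V t ω s')
        = ∑ a, mix s a * ∑ s', T s a s' * (Vstar s' - V t ω s') := by
      calc ∑ s', Pst s s' * (Vstar s' - V t ω s')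
          = ∑ s', ∑ a, mix s a * (T s a s' * (Vstar s' - V t ω s')) := by
            refine Finset.sum_congr rfl fun s' _ => ?_
            rw [hPstdef]
            simp only
            rw [Finset.sum_mul]
            exact Finset.sum_congr rfl fun a _ => by ring
        _ = ∑ a, mix s a * ∑ s', T s a s' * (Vstar s' - V t ω s') := by
            rw [Finset.sum_comm]
            exact Finset.sum_congr rfl fun a _ => by rw [Finset.mul_sum]
    have per : ∀ a, mix s a * (r s a + γ * ∑ s', T s a s' * Vstar s')
        = mix s a * (r s a + γ * ∑ s', T s a s' * V t ω s')
          + γ * (mix s a * ∑ s', T s a s' * (Vstar s' - V t ω s')) := by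
      intro a
      have hsplit : ∑ s', T s a s' * (Vstar s' - V t ω s')
          = (∑ s', T s a s' * Vstar s') - ∑ s', T s a s' * V t ω s' := by
        rw [← Finset.sum_sub_distrib]
        exact Finset.sum_congr rfl fun s' _ => by ring
      rw [hsplit]; ring
    rw [step1, step2, hVstar s]
    rw [Finset.sum_congr rfl fun a _ => per a, Finset.sum_add_distrib, ← Finset.mul_sum]
    ring
  -- the recursion in expectation
  have hDkey : ∀ t s, Vstar s - ∫ ω, V t ω s ∂P
      = (∫ ω, adv t ω s ∂P) + γ * ∑ s', Pst s s' * (Vstar s' - ∫ ω, V t ω s' ∂P) := by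
    intro t s
    have h1 : Vstar s - ∫ ω, V t ω s ∂P = ∫ ω, (Vstar s - V t ω s) ∂P := by
      rw [integral_sub (integrable_const _) (hVint t s), integral_const]
      simp
    have h2 : ∫ ω, (Vstar s - V t ω s) ∂P
        = ∫ ω, (adv t ω s + γ * ∑ s', Pst s s' * (Vstar s' - V t ω s')) ∂P :=
      integral_congr_ae (Filter.Eventually.of_forall fun ω => key t ω s)
    have hint3 : ∀ s' ∈ (Finset.univ : Finset S),
        Integrable (fun ω => Pst s s' * (Vstar s' - V t ω s')) P := by
      intro s' _
      exact ((integrable_const _).sub (hVint t s')).const_mul _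
    have hint2 : Integrable (fun ω => ∑ s', Pst s s' * (Vstar s' - V t ω s')) P :=
      integrable_finset_sum _ hint3
    have h3 : ∫ ω, ∑ s', Pst s s' * (Vstar s' - V t ω s') ∂P
        = ∑ s', Pst s s' * (Vstar s' - ∫ ω, V t ω s' ∂P) := by
      rw [integral_finset_sum _ hint3]
      refine Finset.sum_congr rfl fun s' _ => ?_
      rw [integral_const_mul, integral_sub (integrable_const _) (hVint t s'), integral_const]
      simp
    rw [h1, h2, integral_add (hadvint t s) (hint2.const_mul γ), integral_const_mul, h3]
  -- bias control: the expected expert advantage is at most `E[Ã] + ε`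
  have hAexpIle : ∀ t s k, ∫ ω, Aexp t s k ω ∂P ≤ (∫ ω, Atil t s k ω ∂P) + ε := by
    intro t s k
    have hcond : ∫ ω, (P[Atil t s k | F t.val]) ω ∂P = ∫ ω, Atil t s k ω ∂P :=
      integral_condExp (F.le t.val)
    have hle : ∀ᵐ ω ∂P, Aexp t s k ω ≤ (P[Atil t s k | F t.val]) ω + ε := by
      filter_upwards [hbias t s k] with ω h
      have := abs_le.mp h
      have h2 := this.1
      rw [hAexpdef]
      simp only
      linarith
    calc ∫ ω, Aexp t s k ω ∂P
        ≤ ∫ ω, ((P[Atil t s k | F t.val]) ω + ε) ∂P :=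
          integral_mono_ae (hAexpint t s k) (integrable_condExp.add (integrable_const ε)) hle
      _ = (∫ ω, (P[Atil t s k | F t.val]) ω ∂P) + ε := by
          rw [integral_add integrable_condExp (integrable_const ε), integral_const]
          simp
      _ = (∫ ω, Atil t s k ω ∂P) + ε := by rw [hcond]
  -- regret control: the sum of expected estimates is at most `B/(1-γ)`
  have hregE : ∀ s k, ∑ t, ∫ ω, Atil t s k ω ∂P ≤ B / (1 - γ) := by
    intro s k
    rw [← integral_finset_sum _ fun t _ => hAint t s k]
    have h : ∀ᵐ ω ∂P, ∑ t, Atil t s k ω ≤ B / (1 - γ) := by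
      filter_upwards [hregret] with ω h using h s k
    calc ∫ ω, ∑ t, Atil t s k ω ∂P ≤ ∫ _ω, B / (1 - γ) ∂P :=
          integral_mono_ae (integrable_finset_sum _ fun t _ => hAint t s k)
            (integrable_const _) h
      _ = B / (1 - γ) := by rw [integral_const]; simp
  -- the total expected advantage is at most `C := Tn ε + B/(1-γ)`
  set C : ℝ := Tn * ε + B / (1 - γ) with hCdef
  have hsumAexp : ∀ s k, ∑ t, ∫ ω, Aexp t s k ω ∂P ≤ C := by
    intro s k
    calc ∑ t, ∫ ω, Aexp t s k ω ∂P
        ≤ ∑ t, ((∫ ω, Atil t s k ω ∂P) + ε) :=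
          Finset.sum_le_sum fun t _ => hAexpIle t s k
      _ = (∑ t, ∫ ω, Atil t s k ω ∂P) + Tn * ε := by
          rw [Finset.sum_add_distrib]
          simp [mul_comm]
      _ ≤ B / (1 - γ) + Tn * ε := by linarith [hregE s k]
      _ = C := by rw [hCdef]; ring
  have hsumadv : ∀ s, ∑ t, ∫ ω, adv t ω s ∂P ≤ C := by
    intro s
    have h1 : ∀ t : Fin Tn, ∫ ω, adv t ω s ∂P = ∑ k, qstar s k * ∫ ω, Aexp t s k ω ∂P := by
      intro t
      rw [hadvdef]
      simp only
      rw [integral_finset_sum _ fun k _ => (hAexpint t s k).const_mul _]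
      exact Finset.sum_congr rfl fun k _ => integral_const_mul _ _
    calc ∑ t, ∫ ω, adv t ω s ∂P
        = ∑ k, qstar s k * ∑ t, ∫ ω, Aexp t s k ω ∂P := by
          rw [Finset.sum_congr rfl fun t _ => h1 t, Finset.sum_comm]
          exact Finset.sum_congr rfl fun k _ => by rw [Finset.mul_sum]
      _ ≤ ∑ k, qstar s k * C :=
          Finset.sum_le_sum fun k _ => mul_le_mul_of_nonneg_left (hsumAexp s k) (hqs0 s k)
      _ = C := by rw [← Finset.sum_mul, hqs1, one_mul]
  -- the aggregated difference satisfies the contraction inequality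
  set f : S → ℝ := fun s => ∑ t, (Vstar s - ∫ ω, V t ω s ∂P) with hfdef
  have hf : ∀ s, f s ≤ C + γ * ∑ s', Pst s s' * f s' := by
    intro s
    have : f s = (∑ t, ∫ ω, adv t ω s ∂P) + γ * ∑ s', Pst s s' * f s' := by
      rw [hfdef]
      simp only
      rw [Finset.sum_congr rfl fun t _ => hDkey t s]
      rw [Finset.sum_add_distrib]
      congr 1
      rw [← Finset.mul_sum, Finset.sum_comm]
      congr 1
      exact Finset.sum_congr rfl fun s' _ => by rw [Finset.mul_sum]
    rw [this]
    have := hsumadv s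
    linarith
  have hfb := contraction_bound' Pst hPst0 hPst1 γ C (le_of_lt hγ0) hγ1 f hf s0
  -- conclude by arithmetic
  have hTn' : (0 : ℝ) < Tn := by exact_mod_cast hTn
  have hfs0 : f s0 = Tn * Vstar s0 - ∑ t, ∫ ω, V t ω s0 ∂P := by
    rw [hfdef]
    simp [Finset.sum_sub_distrib, Finset.card_univ]
  have hgoal : Vstar s0 - (1 / (Tn : ℝ)) * ∑ t, ∫ ω, V t ω s0 ∂P = (1 / Tn) * f s0 := by
    rw [hfs0]; field_simp
  rw [hgoal]
  have hCb : (1 / (Tn : ℝ)) * f s0 ≤ (1 / Tn) * (C / (1 - γ)) := by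
    apply mul_le_mul_of_nonneg_left hfb
    positivity
  refine le_trans hCb (le_of_eq ?_)
  rw [hCdef]
  field_simp
end

section
/- (High-probability control.) Suppose that almost surely, for all t ∈ {1,…,T}, s ∈ S, k ∈ [K]: |𝔼[Ã_t(s,k) | F_{t−1}] − A_{q_tΠ}(s,k)| ≤ ε, that almost surely |Ã_t(s,k)| ≤ 1/(1−γ) for all t, s, k, and that almost surely, for every s ∈ S: max_{k∈[K]} ∑_{t=1}^T Ã_t(s,k) ≤ B/(1−γ). Then for every fixed (deterministic) state-dependent weight vector q⋆ over [K], every state s0 ∈ S, and every δ ∈ (0,1), with ℙ-probability at least 1−δ: V_{q⋆Π}(s0) − (1/T) ∑_{t=1}^T V_{q_tΠ}(s0) ≤ ε/(1−γ) + B/((1−γ)² T) + (1/(1−γ)²)·√(2 ln(1/δ)/T). -/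
open Finset MeasureTheory

/-!
By the performance-difference lemma,
`(1 - γ) (V_{q⋆Π}(s₀) - V_{q_tΠ}(s₀)) = ∑_{s,k} w(s,k) A_{q_tΠ}(s,k)`, where
`w(s,k) = d(s) q⋆(k|s)` and `d` is the normalised discounted occupancy of `q⋆Π` started at
`s₀`. The weights `w` form a deterministic probability vector, so with `Y_t = ∑ w Ã_t` the bias
assumption gives `(1 - γ) (V_{q⋆Π}(s₀) - V_{q_tΠ}(s₀)) ≤ ε + 𝔼[Y_t | F_{t-1}]`. Summing over `t`,
`∑ 𝔼[Y_t | F_{t-1}] = ∑ (𝔼[Y_t | F_{t-1}] - Y_t) + ∑ Y_t`: the second sum is at most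
`B / (1 - γ)` by the regret bound, and the first is a martingale with increments bounded by
`1 / (1 - γ)`, which the Azuma–Hoeffding inequality controls with probability `1 - δ`.
-/

open Real ProbabilityTheory

theorem exp_neg_mul_le_cosh_sub_sinh {c y : ℝ} (hc : 0 < c) (hy : |y| ≤ c) (t : ℝ) :
    exp (-(t * y)) ≤ cosh (t * c) - sinh (t * c) / c * y := by
  obtain ⟨hy1, hy2⟩ := abs_le.1 hy
  have hθ0 : 0 ≤ (c - y) / (2 * c) := div_nonneg (by linarith) (by positivity)
  have hθ1 : 0 ≤ (c + y) / (2 * c) := div_nonneg (by linarith) (by positivity)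
  have hsum : (c - y) / (2 * c) + (c + y) / (2 * c) = 1 := by field_simp; ring
  have h := convexOn_exp.2 (Set.mem_univ (t * c)) (Set.mem_univ (-(t * c))) hθ0 hθ1 hsum
  simp only [smul_eq_mul] at h
  have harg : (c - y) / (2 * c) * (t * c) + (c + y) / (2 * c) * -(t * c) = -(t * y) := by
    field_simp; ring
  rw [harg] at h
  refine h.trans_eq ?_
  rw [cosh_eq, sinh_eq]; field_simp; ring

/-- Hoeffding's lemma for the law on `{-c, c}` with mean `m`, evaluated at `-t`. -/
theorem exp_mul_mul_cosh_sub_sinh_le {c m : ℝ} (hc : 0 < c) (hm : |m| ≤ c) (t : ℝ) :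
    exp (t * m) * (cosh (t * c) - sinh (t * c) / c * m) ≤ exp (t ^ 2 * c ^ 2 / 2) := by
  obtain ⟨hm1, hm2⟩ := abs_le.1 hm
  let p : unitInterval := ⟨(c + m) / (2 * c), div_nonneg (by linarith) (by positivity),
    (div_le_one (by positivity)).2 (by linarith)⟩
  have hBer : ∀ f : ℝ → ℝ, ∫ x, f x ∂Ber(c, -c, p) = p * f c + (1 - p) * f (-c) := fun f => by
    simp [integral_bernoulliMeasure]
  have hIcc : ∀ᵐ x ∂Ber(c, -c, p), x - m ∈ Set.Icc (-c - m) (c - m) := by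
    refine measure_mono_null (fun x hx => ?_) (bernoulliMeasure_apply_of_notMem_of_notMem p
      (s := (Set.Icc (-c) c)ᶜ) measurableSet_Icc.compl (by simp; linarith) (by simp; linarith))
    simp only [Set.mem_ofPred_eq, Set.mem_Icc, Set.mem_compl_iff] at hx ⊢
    exact fun h => hx ⟨by linarith, by linarith⟩
  have hmean : ∫ x, x - m ∂Ber(c, -c, p) = 0 := by
    rw [hBer]; simp only [p]; field_simp; ring
  have hmgf := (hasSubgaussianMGF_of_mem_Icc_of_integral_eq_zero (by fun_prop) hIcc
    hmean).mgf_le (-t)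
  rw [mgf, hBer] at hmgf
  convert hmgf using 1
  · simp only [p, cosh_eq, sinh_eq]
    rw [show -t * (c - m) = t * m + -(t * c) by ring, show -t * (-c - m) = t * m + t * c by ring,
      exp_add, exp_add]
    field_simp
    ring
  · rw [show c - m - (-c - m) = 2 * c by ring, Real.nnnorm_of_nonneg (by positivity)]
    push_cast
    ring_nf

-- Mathlib's conditionally sub-Gaussian API needs a standard Borel `Ω`, so the
-- Azuma–Hoeffding bound is proved directly.
section Azuma

variable {Ω : Type*} {mΩ : MeasurableSpace Ω} {μ : Measure Ω}
  {F : Filtration ℕ mΩ} {Y : ℕ → Ω → ℝ} {c : ℝ}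

theorem integral_mul_condExp_of_stronglyMeasurable [IsFiniteMeasure μ] {m : MeasurableSpace Ω}
    (hm : m ≤ mΩ) {U X : Ω → ℝ} (hU : StronglyMeasurable[m] U) (hUX : Integrable (U * X) μ)
    (hX : Integrable X μ) :
    ∫ ω, U ω * μ[X | m] ω ∂μ = ∫ ω, U ω * X ω ∂μ :=
  (integral_congr_ae (condExp_mul_of_stronglyMeasurable_left hU hUX hX)).symm.trans
    (integral_condExp hm)

/-- Bound `exp (-t X)` by its chord on `[-c, c]`, which is affine in `X`; pulling out the
`m`-measurable weight replaces `X` by `𝔼[X | m]`, and the two-point Hoeffding lemma concludes. -/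
theorem integral_mul_exp_condExp_sub_le [IsFiniteMeasure μ] {m : MeasurableSpace Ω}
    (hm : m ≤ mΩ) {U X : Ω → ℝ} (hU : StronglyMeasurable[m] U) (hU0 : ∀ ω, 0 ≤ U ω)
    (hUi : Integrable U μ) (hX : Integrable X μ) (hXc : ∀ᵐ ω ∂μ, |X ω| ≤ c) (hc : 0 < c)
    (t : ℝ) :
    ∫ ω, U ω * exp (t * (μ[X | m] ω - X ω)) ∂μ ≤ exp (t ^ 2 * c ^ 2 / 2) * ∫ ω, U ω ∂μ := by
  set Z := μ[X | m]
  have hZ : StronglyMeasurable[m] Z := stronglyMeasurable_condExp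
  have hZc : ∀ᵐ ω ∂μ, |Z ω| ≤ c := ae_bdd_abs_condExp_of_ae_bdd_abs hXc
  set V : Ω → ℝ := fun ω => U ω * exp (t * Z ω)
  have hV : StronglyMeasurable[m] V :=
    hU.mul (continuous_exp.comp_stronglyMeasurable (hZ.const_mul t))
  have hV0 : ∀ ω, 0 ≤ V ω := fun ω => mul_nonneg (hU0 ω) (exp_pos _).le
  have hVi : Integrable V μ := by
    refine hUi.mul_bdd (c := exp (|t| * c))
      (continuous_exp.comp_stronglyMeasurable ((hZ.mono hm).const_mul t)).aestronglyMeasurable ?_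
    filter_upwards [hZc] with ω hω
    rw [Real.norm_eq_abs, abs_exp, exp_le_exp]
    exact (le_abs_self _).trans (by rw [abs_mul]; gcongr)
  have hVX : Integrable (V * X) μ := hVi.mul_bdd hX.1 (by simpa using hXc)
  have hVZ : Integrable (fun ω => V ω * Z ω) μ :=
    hVi.mul_bdd (hZ.mono hm).aestronglyMeasurable (by simpa using hZc)
  set α := cosh (t * c)
  set β := sinh (t * c) / c
  have hlin : ∀ f : Ω → ℝ, Integrable (fun ω => V ω * f ω) μ →
      ∫ ω, V ω * (α - β * f ω) ∂μ = α * ∫ ω, V ω ∂μ - β * ∫ ω, V ω * f ω ∂μ := fun f hf => by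
    rw [← integral_const_mul, ← integral_const_mul, ← integral_sub (hVi.const_mul α)
      (hf.const_mul β)]
    exact integral_congr_ae (ae_of_all _ fun ω => by ring)
  calc ∫ ω, U ω * exp (t * (Z ω - X ω)) ∂μ = ∫ ω, V ω * exp (-(t * X ω)) ∂μ := by
        simp only [V, mul_assoc, ← exp_add]
        ring_nf
    _ ≤ ∫ ω, V ω * (α - β * X ω) ∂μ := by
        refine integral_mono_of_nonneg
          (ae_of_all _ fun ω => mul_nonneg (hV0 ω) (exp_pos _).le) ?_ ?_
        · exact ((hVi.const_mul α).sub (hVX.const_mul β)).congr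
            (ae_of_all _ fun ω => by simp only [Pi.sub_apply, Pi.mul_apply]; ring)
        · filter_upwards [hXc] with ω hω
          exact mul_le_mul_of_nonneg_left (exp_neg_mul_le_cosh_sub_sinh hc hω t) (hV0 ω)
    _ = ∫ ω, V ω * (α - β * Z ω) ∂μ := by
        rw [hlin _ hVX, hlin _ hVZ, integral_mul_condExp_of_stronglyMeasurable hm hV hVX hX]
    _ ≤ ∫ ω, U ω * exp (t ^ 2 * c ^ 2 / 2) ∂μ := by
        refine integral_mono_of_nonneg ?_ (hUi.mul_const _) ?_
        · filter_upwards [hZc] with ω hω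
          exact mul_nonneg (hV0 ω) ((exp_pos _).le.trans (exp_neg_mul_le_cosh_sub_sinh hc hω t))
        · filter_upwards [hZc] with ω hω
          rw [mul_assoc]
          exact mul_le_mul_of_nonneg_left (exp_mul_mul_cosh_sub_sinh_le hc hω t) (hU0 ω)
    _ = exp (t ^ 2 * c ^ 2 / 2) * ∫ ω, U ω ∂μ := by rw [integral_mul_const, mul_comm]

theorem stronglyMeasurable_sum_condExp_sub (hY : ∀ n, StronglyMeasurable[F (n + 1)] (Y n))
    (n : ℕ) :
    StronglyMeasurable[F n] fun ω => ∑ i ∈ range n, (μ[Y i | F i] ω - Y i ω) :=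
  Finset.stronglyMeasurable_fun_sum _ fun i hi =>
    (stronglyMeasurable_condExp.mono (F.mono (mem_range.1 hi).le)).sub
      ((hY i).mono (F.mono (mem_range.1 hi)))

theorem integrable_exp_mul_sum_condExp_sub [IsFiniteMeasure μ]
    (hY : ∀ n, StronglyMeasurable[F (n + 1)] (Y n))
    (hYc : ∀ n, ∀ᵐ ω ∂μ, |Y n ω| ≤ c) (t : ℝ) (n : ℕ) :
    Integrable (fun ω => exp (t * ∑ i ∈ range n, (μ[Y i | F i] ω - Y i ω))) μ := by
  induction n with
  | zero => simp
  | succ n ih =>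
    simp only [sum_range_succ, mul_add, exp_add]
    refine ih.mul_bdd (c := exp (|t| * (2 * c))) (continuous_exp.comp_stronglyMeasurable
      (((stronglyMeasurable_condExp.mono (F.le n)).sub ((hY n).mono (F.le _))).const_mul
        t)).aestronglyMeasurable ?_
    filter_upwards [hYc n, ae_bdd_abs_condExp_of_ae_bdd_abs (m := F n) (hYc n)] with ω hYω hZω
    rw [Real.norm_eq_abs, abs_exp, exp_le_exp]
    refine (le_abs_self _).trans ?_
    rw [abs_mul]
    gcongr
    exact (abs_sub _ _).trans (by linarith)

theorem integral_exp_mul_sum_condExp_sub_le [IsProbabilityMeasure μ]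
    (hY : ∀ n, StronglyMeasurable[F (n + 1)] (Y n))
    (hYc : ∀ n, ∀ᵐ ω ∂μ, |Y n ω| ≤ c) (hc : 0 < c) (t : ℝ) (n : ℕ) :
    ∫ ω, exp (t * ∑ i ∈ range n, (μ[Y i | F i] ω - Y i ω)) ∂μ
      ≤ exp (n * (t ^ 2 * c ^ 2 / 2)) := by
  induction n with
  | zero => simp
  | succ n ih =>
    have hstep := integral_mul_exp_condExp_sub_le (F.le n)
      (continuous_exp.comp_stronglyMeasurable
        ((stronglyMeasurable_sum_condExp_sub hY n).const_mul t))
      (fun ω => (exp_pos _).le) (integrable_exp_mul_sum_condExp_sub hY hYc t n)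
      (Integrable.of_bound ((hY n).mono (F.le _)).aestronglyMeasurable c (by simpa using hYc n))
      (hYc n) hc t
    simp only [sum_range_succ, mul_add, exp_add]
    calc _ ≤ _ := hstep
      _ ≤ exp (t ^ 2 * c ^ 2 / 2) * exp (n * (t ^ 2 * c ^ 2 / 2)) := by gcongr
      _ = exp ((n + 1 : ℕ) * (t ^ 2 * c ^ 2 / 2)) := by rw [← exp_add]; push_cast; ring_nf

/-- **Azuma–Hoeffding inequality** for bounded adapted increments. -/
theorem measureReal_sum_condExp_sub_ge_le [IsProbabilityMeasure μ]
    (hY : ∀ n, StronglyMeasurable[F (n + 1)] (Y n))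
    (hYc : ∀ n, ∀ᵐ ω ∂μ, |Y n ω| ≤ c) (hc : 0 < c) {n : ℕ} (hn : 0 < n) {a : ℝ} (ha : 0 ≤ a) :
    μ.real {ω | a ≤ ∑ i ∈ range n, (μ[Y i | F i] ω - Y i ω)}
      ≤ exp (-a ^ 2 / (2 * n * c ^ 2)) := by
  set t := a / (n * c ^ 2)
  have ht : 0 ≤ t := by positivity
  calc _ ≤ exp (-t * a) * mgf (fun ω => ∑ i ∈ range n, (μ[Y i | F i] ω - Y i ω)) μ t :=
        measure_ge_le_exp_mul_mgf a ht (integrable_exp_mul_sum_condExp_sub hY hYc t n)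
    _ ≤ exp (-t * a) * exp (n * (t ^ 2 * c ^ 2 / 2)) := by
        gcongr
        exact integral_exp_mul_sum_condExp_sub_le hY hYc hc t n
    _ = exp (-a ^ 2 / (2 * n * c ^ 2)) := by
        rw [← exp_add]
        congr 1
        simp only [t]
        field_simp
        ring

theorem measureReal_sum_fin_condExp_sub_ge_sqrt_log_le [IsProbabilityMeasure μ] {n : ℕ}
    {X : Fin n → Ω → ℝ} (hX : ∀ i : Fin n, StronglyMeasurable[F (i.val + 1)] (X i))
    (hXc : ∀ i, ∀ᵐ ω ∂μ, |X i ω| ≤ c) (hc : 0 < c) (hn : 0 < n) {δ : ℝ} (hδ0 : 0 < δ)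
    (hδ1 : δ ≤ 1) :
    μ.real {ω | c * √(2 * n * log (1 / δ)) ≤ ∑ i, (μ[X i | F i.val] ω - X i ω)} ≤ δ := by
  set Y : ℕ → Ω → ℝ := fun i => if h : i < n then X ⟨i, h⟩ else 0
  have hYX : ∀ i : Fin n, Y i = X i := fun i => dif_pos i.isLt
  have hY : ∀ i, StronglyMeasurable[F (i + 1)] (Y i) := fun i => by
    by_cases h : i < n
    · simpa only [Y, dif_pos h] using hX ⟨i, h⟩
    · simp only [Y, dif_neg h]
      exact stronglyMeasurable_zero
  have hYc : ∀ i, ∀ᵐ ω ∂μ, |Y i ω| ≤ c := fun i => by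
    by_cases h : i < n
    · simpa only [Y, dif_pos h] using hXc ⟨i, h⟩
    · simp only [Y, dif_neg h, Pi.zero_apply, abs_zero]
      exact ae_of_all _ fun _ => hc.le
  have hL : 0 ≤ log (1 / δ) := log_nonneg ((one_le_div hδ0).2 hδ1)
  have hδ : exp (-(c * √(2 * n * log (1 / δ))) ^ 2 / (2 * n * c ^ 2)) = δ := by
    have hn' : (0 : ℝ) < n := by exact_mod_cast hn
    rw [mul_pow, sq_sqrt (by positivity), show ∀ z : ℝ, -(c ^ 2 * (2 * n * z)) / (2 * n * c ^ 2)
      = -z from fun z => by field_simp, one_div, log_inv, neg_neg, exp_log hδ0]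
  convert measureReal_sum_condExp_sub_ge_le hY hYc hc hn
    (a := c * √(2 * n * log (1 / δ))) (by positivity) using 4 with ω
  · rw [← Fin.sum_univ_eq_sum_range (fun i => μ[Y i | F i] ω - Y i ω)]
    simp only [hYX]
  · exact hδ.symm

end Azuma

namespace Matrix

variable {S : Type*} [Fintype S] [DecidableEq S] {P : Matrix S S ℝ} {γ : ℝ}

theorem nonneg_of_nonneg_one_sub_smul_mulVec (hP : P ∈ rowStochastic ℝ S) (hγ0 : 0 ≤ γ)
    (hγ1 : γ < 1) {x : S → ℝ} (hx : 0 ≤ (1 - γ • P) *ᵥ x) : 0 ≤ x := by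
  intro i
  have : Nonempty S := ⟨i⟩
  obtain ⟨i₀, hi₀⟩ := Finite.exists_min x
  have hPx : x i₀ ≤ (P *ᵥ x) i₀ :=
    calc x i₀ = ∑ j, P i₀ j * x i₀ := by
          rw [← sum_mul, sum_row_of_mem_rowStochastic hP, one_mul]
      _ ≤ ∑ j, P i₀ j * x j :=
          sum_le_sum fun j _ => mul_le_mul_of_nonneg_left (hi₀ j) (nonneg_of_mem_rowStochastic hP)
  have h := hx i₀
  simp only [sub_mulVec, one_mulVec, smul_mulVec, Pi.sub_apply, Pi.smul_apply, smul_eq_mul,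
    Pi.zero_apply] at h
  have : 0 ≤ x i₀ := by nlinarith [mul_le_mul_of_nonneg_left hPx hγ0]
  exact this.trans (hi₀ i)

/-- The normalised discounted occupancy `d = (1 - γ) e_{s₀}ᵀ (1 - γ P)⁻¹` of a Markov chain. -/
theorem exists_discounted_occupancy (hP : P ∈ rowStochastic ℝ S) (hγ0 : 0 ≤ γ) (hγ1 : γ < 1)
    (s₀ : S) :
    ∃ d : S → ℝ, 0 ≤ d ∧ ∑ s, d s = 1 ∧
      ∀ f g : S → ℝ, (1 - γ • P) *ᵥ g = f → (1 - γ) * g s₀ = ∑ s, d s * f s := by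
  set M := 1 - γ • P
  have hpos : ∀ x, 0 ≤ M *ᵥ x → 0 ≤ x := fun _ => nonneg_of_nonneg_one_sub_smul_mulVec hP hγ0 hγ1
  have hinj : Function.Injective M.mulVec := fun x y hxy => by
    have h₁ := hpos (x - y) (by rw [mulVec_sub, hxy, sub_self])
    have h₂ := hpos (y - x) (by rw [mulVec_sub, hxy, sub_self])
    exact le_antisymm (sub_nonneg.1 h₂) (sub_nonneg.1 h₁)
  have hdet := (isUnit_iff_isUnit_det M).1 (mulVec_injective_iff_isUnit.1 hinj)
  have hNM : ∀ g, M⁻¹ *ᵥ (M *ᵥ g) = g := fun g => by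
    rw [mulVec_mulVec, nonsing_inv_mul _ hdet, one_mulVec]
  refine ⟨fun s => (1 - γ) * M⁻¹ s₀ s, fun s => ?_, ?_, fun f g hg => ?_⟩
  · have hcol : M *ᵥ (M⁻¹ *ᵥ Pi.single s 1) = Pi.single s 1 := by
      rw [mulVec_mulVec, mul_nonsing_inv _ hdet, one_mulVec]
    have := hpos _ (hcol ▸ Pi.single_nonneg.2 zero_le_one) s₀
    simp only [mulVec_single_one, Pi.zero_apply] at this
    exact mul_nonneg (by linarith) this
  · have hM1 : M *ᵥ 1 = (1 - γ) • 1 := by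
      rw [sub_mulVec, one_mulVec, smul_mulVec, one_vecMul_of_mem_rowStochastic hP, sub_smul,
        one_smul]
    have := congr_fun (hNM 1) s₀
    rw [hM1, mulVec_smul] at this
    simpa [mulVec, dotProduct, mul_sum] using this
  · rw [← hNM g, hg]
    simp [mulVec, dotProduct, mul_sum, mul_assoc]

end Matrix

section MDP

open Matrix

variable {S A : Type*} [Fintype A] {K : ℕ} {experts : Fin K → S → A → ℝ}
  {r : S → A → ℝ} {T : S → A → S → ℝ} {γ : ℝ}

theorem sum_mixPolicy (hexp1 : ∀ k s, ∑ a, experts k s a = 1) {q : S → Fin K → ℝ}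
    (hq1 : ∀ s, ∑ k, q s k = 1) (s : S) :
    ∑ a, mixPolicy experts q s a = 1 := by
  simp only [mixPolicy]
  rw [sum_comm]
  simp [← mul_sum, hexp1, hq1]

variable [Fintype S]

variable (experts T) in
noncomputable def mixTransition (q : S → Fin K → ℝ) : Matrix S S ℝ :=
  fun s s' => ∑ a, mixPolicy experts q s a * T s a s'

variable (experts r T γ) in
/-- The expert-level advantage `A_π(s, k)`, where `π` enters only through its value `V`. -/
def expertAdvantage (V : S → ℝ) (s : S) (k : Fin K) : ℝ :=
  ∑ a, experts k s a * ((r s a + γ * ∑ s', T s a s' * V s') - V s)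

theorem mixTransition_mem_rowStochastic [DecidableEq S] (hT0 : ∀ s a s', 0 ≤ T s a s')
    (hT1 : ∀ s a, ∑ s', T s a s' = 1) (hexp0 : ∀ k s a, 0 ≤ experts k s a)
    (hexp1 : ∀ k s, ∑ a, experts k s a = 1) {q : S → Fin K → ℝ} (hq0 : ∀ s k, 0 ≤ q s k)
    (hq1 : ∀ s, ∑ k, q s k = 1) :
    mixTransition experts T q ∈ rowStochastic ℝ S := by
  refine mem_rowStochastic_iff_sum.2 ⟨fun s s' => ?_, fun s => ?_⟩
  · exact sum_nonneg fun a _ => mul_nonneg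
      (sum_nonneg fun k _ => mul_nonneg (hq0 s k) (hexp0 k s a)) (hT0 s a s')
  · simp only [mixTransition]
    rw [sum_comm]
    simp [← mul_sum, hT1, sum_mixPolicy hexp1 hq1]

theorem sum_mul_expertAdvantage (hexp1 : ∀ k s, ∑ a, experts k s a = 1) {q : S → Fin K → ℝ}
    (hq1 : ∀ s, ∑ k, q s k = 1) (V : S → ℝ) (s : S) :
    ∑ k, q s k * expertAdvantage experts r T γ V s k
      = ∑ a, mixPolicy experts q s a * (r s a + γ * ∑ s', T s a s' * V s') - V s := by
  have hV : V s = ∑ k, q s k * ∑ a, experts k s a * V s := by simp [← sum_mul, hexp1, hq1]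
  rw [hV]
  simp only [expertAdvantage, mixPolicy, mul_sub, sum_sub_distrib, mul_sum, sum_mul]
  rw [sum_comm (s := univ) (t := univ)]
  simp only [mul_assoc]

theorem one_sub_smul_mixTransition_mulVec_sub [DecidableEq S]
    (hexp1 : ∀ k s, ∑ a, experts k s a = 1) {q : S → Fin K → ℝ} (hq1 : ∀ s, ∑ k, q s k = 1)
    {Vq : S → ℝ}
    (hVq : ∀ s, Vq s = ∑ a, mixPolicy experts q s a * (r s a + γ * ∑ s', T s a s' * Vq s'))
    (V : S → ℝ) :
    (1 - γ • mixTransition experts T q) *ᵥ (Vq - V)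
      = fun s => ∑ k, q s k * expertAdvantage experts r T γ V s k := by
  ext s
  rw [sum_mul_expertAdvantage hexp1 hq1]
  rw [sub_mulVec, one_mulVec, smul_mulVec]
  simp only [Pi.sub_apply, Pi.smul_apply, smul_eq_mul, mulVec, dotProduct, mixTransition]
  rw [hVq s]
  have hswap : ∀ W : S → ℝ, γ * ∑ s', (∑ a, mixPolicy experts q s a * T s a s') * W s'
      = ∑ a, mixPolicy experts q s a * (γ * ∑ s', T s a s' * W s') := fun W => by
    simp only [mul_sum, sum_mul]
    rw [sum_comm]
    exact sum_congr rfl fun _ _ => sum_congr rfl fun _ _ => by ring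
  simp only [mul_sub, sum_sub_distrib, hswap, mul_add, sum_add_distrib]
  ring

theorem performance_difference [DecidableEq S] (hT0 : ∀ s a s', 0 ≤ T s a s')
    (hT1 : ∀ s a, ∑ s', T s a s' = 1) (hexp0 : ∀ k s a, 0 ≤ experts k s a)
    (hexp1 : ∀ k s, ∑ a, experts k s a = 1) (hγ0 : 0 ≤ γ) (hγ1 : γ < 1)
    {q : S → Fin K → ℝ} (hq0 : ∀ s k, 0 ≤ q s k) (hq1 : ∀ s, ∑ k, q s k = 1) {Vq : S → ℝ}
    (hVq : ∀ s, Vq s = ∑ a, mixPolicy experts q s a * (r s a + γ * ∑ s', T s a s' * Vq s'))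
    (s₀ : S) :
    ∃ w : S × Fin K → ℝ, 0 ≤ w ∧ ∑ p, w p = 1 ∧ ∀ V : S → ℝ,
      (1 - γ) * (Vq s₀ - V s₀) = ∑ p, w p * expertAdvantage experts r T γ V p.1 p.2 := by
  obtain ⟨d, hd0, hd1, hd⟩ := exists_discounted_occupancy
    (mixTransition_mem_rowStochastic hT0 hT1 hexp0 hexp1 hq0 hq1) hγ0 hγ1 s₀
  refine ⟨fun p => d p.1 * q p.1 p.2, fun p => mul_nonneg (hd0 _) (hq0 _ _), ?_, fun V => ?_⟩
  · simp [Fintype.sum_prod_type, ← mul_sum, hq1, hd1]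
  · have := hd _ _ (one_sub_smul_mixTransition_mulVec_sub hexp1 hq1 hVq V)
    rw [Pi.sub_apply] at this
    rw [this]
    simp [Fintype.sum_prod_type, mul_sum, mul_assoc]

end MDP

theorem sum_mul_le_of_le {ι : Type*} [Fintype ι] {w x : ι → ℝ} {c : ℝ} (hw0 : 0 ≤ w)
    (hw1 : ∑ i, w i = 1) (hx : ∀ i, x i ≤ c) : ∑ i, w i * x i ≤ c :=
  calc ∑ i, w i * x i ≤ ∑ i, w i * c :=
        sum_le_sum fun i _ => mul_le_mul_of_nonneg_left (hx i) (hw0 i)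
    _ = c := by rw [← sum_mul, hw1, one_mul]

theorem abs_sum_mul_le_of_abs_le {ι : Type*} [Fintype ι] {w x : ι → ℝ} {c : ℝ} (hw0 : 0 ≤ w)
    (hw1 : ∑ i, w i = 1) (hx : ∀ i, |x i| ≤ c) : |∑ i, w i * x i| ≤ c := by
  refine abs_le.2 ⟨?_, sum_mul_le_of_le hw0 hw1 fun i => (le_abs_self _).trans (hx i)⟩
  have := sum_mul_le_of_le hw0 hw1 (x := -x) fun i => (neg_le_abs _).trans (hx i)
  simp only [Pi.neg_apply, mul_neg, sum_neg_distrib] at this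
  linarith

theorem sum_mul_le_add_of_abs_sub_le {ι : Type*} [Fintype ι] {w x e : ι → ℝ} {ε : ℝ}
    (hw0 : 0 ≤ w) (hw1 : ∑ i, w i = 1) (hx : ∀ i, |e i - x i| ≤ ε) :
    ∑ i, w i * x i ≤ ε + ∑ i, w i * e i := by
  have := sum_mul_le_of_le hw0 hw1 (x := x - e) (c := ε) fun i => by
    linarith [Pi.sub_apply x e i, (abs_le.1 (hx i)).1]
  simp only [Pi.sub_apply, mul_sub, sum_sub_distrib] at this
  linarith

theorem condExp_sum_mul {Ω ι : Type*} {mΩ : MeasurableSpace Ω} {μ : Measure Ω} [Fintype ι]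
    (w : ι → ℝ) {f : ι → Ω → ℝ} (hf : ∀ i, Integrable (f i) μ) (m : MeasurableSpace Ω) :
    μ[fun ω => ∑ i, w i * f i ω | m] =ᵐ[μ] fun ω => ∑ i, w i * μ[f i | m] ω := by
  have hsum : (fun ω => ∑ i, w i * f i ω) = ∑ i, w i • f i := by ext; simp
  rw [hsum]
  filter_upwards [condExp_finsetSum (s := univ) (fun i _ => (hf i).smul (w i)) m,
    ae_all_iff.2 fun i => condExp_smul (w i) (f i) m] with ω hsum hsmul
  simp [hsum, hsmul]

theorem ofReal_one_sub_le_measure_of_ae {Ω : Type*} {mΩ : MeasurableSpace Ω} {μ : Measure Ω}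
    [IsProbabilityMeasure μ] {s t : Set Ω} {δ : ℝ} (hs : μ.real s ≤ δ)
    (hst : ∀ᵐ ω ∂μ, ω ∉ s → ω ∈ t) :
    ENNReal.ofReal (1 - δ) ≤ μ t := by
  have hcompl : 1 ≤ μ.real s + μ.real sᶜ := by
    simpa using measureReal_union_le (μ := μ) s sᶜ
  calc ENNReal.ofReal (1 - δ) ≤ ENNReal.ofReal (μ.real sᶜ) := ENNReal.ofReal_le_ofReal (by linarith)
    _ = μ sᶜ := ofReal_measureReal
    _ ≤ μ t := measure_mono_ae hst

theorem sub_mean_le_of_sum_le {n : ℕ} (hn : 0 < n) {γ x ε B L : ℝ} (hγ1 : γ < 1)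
    {v e y : Fin n → ℝ} (hround : ∀ t, (1 - γ) * (x - v t) ≤ ε + e t)
    (hy : ∑ t, y t ≤ B / (1 - γ)) (he : ∑ t, (e t - y t) < 1 / (1 - γ) * √(2 * n * L)) :
    x - (1 / n) * ∑ t, v t
      ≤ ε / (1 - γ) + B / ((1 - γ) ^ 2 * n) + (1 / (1 - γ) ^ 2) * √(2 * L / n) := by
  have h1γ : 0 < 1 - γ := by linarith
  have hnR : (0 : ℝ) < n := by exact_mod_cast hn
  have hsum : (1 - γ) * (n * x - ∑ t, v t) ≤ n * ε + 1 / (1 - γ) * √(2 * n * L) + B / (1 - γ) := by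
    have := sum_le_sum fun t (_ : t ∈ univ) => hround t
    simp only [← mul_sum, sum_sub_distrib, sum_add_distrib, sum_const, card_univ,
      Fintype.card_fin, nsmul_eq_mul] at this he
    linarith
  have hsqrt : √(2 * n * L) = n * √(2 * L / n) := by
    rw [show 2 * n * L = n ^ 2 * (2 * L / n) by field_simp, Real.sqrt_mul (by positivity),
      Real.sqrt_sq hnR.le]
  calc x - (1 / n) * ∑ t, v t = (1 - γ) * (n * x - ∑ t, v t) / ((1 - γ) * n) := by
        field_simp
    _ ≤ (n * ε + 1 / (1 - γ) * √(2 * n * L) + B / (1 - γ)) / ((1 - γ) * n) := by gcongr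
    _ = _ := by rw [hsqrt]; field_simp; ring

theorem high_probability_control_general
    {S A : Type*} [Fintype S] [Fintype A]
    (T : S → A → S → ℝ) (hT0 : ∀ s a s', 0 ≤ T s a s')
    (hT1 : ∀ s a, ∑ s', T s a s' = 1)
    (r : S → A → ℝ)
    (γ : ℝ) (hγ0 : 0 < γ) (hγ1 : γ < 1)
    (K : ℕ)
    (experts : Fin K → S → A → ℝ)
    (hexp0 : ∀ k s a, 0 ≤ experts k s a)
    (hexp1 : ∀ k s, ∑ a, experts k s a = 1)
    (Tn : ℕ) (hTn : 0 < Tn)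
    {Ω : Type*} {mΩ : MeasurableSpace Ω} (P : Measure Ω) [IsProbabilityMeasure P]
    (F : Filtration ℕ mΩ)
    (ε B : ℝ)
    -- the (random) value functions of the mixture policies `q_tΠ`
    (V : Fin Tn → Ω → S → ℝ)
    -- the estimated expert advantages `Ã_t(s,k)`, with `Ã_t` being `F_t`-measurable
    (Atil : Fin Tn → S → Fin K → Ω → ℝ)
    (hAmeas : ∀ t s k, StronglyMeasurable[F (t.val + 1)] (Atil t s k))
    -- conditional bias at most ε
    (hbias : ∀ t s k, ∀ᵐ ω ∂P,
      |(P[Atil t s k | F t.val]) ω -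
        (∑ a, experts k s a *
          ((r s a + γ * ∑ s', T s a s' * V t ω s') - V t ω s))| ≤ ε)
    -- almost-sure boundedness of the estimated advantages
    (hAbd : ∀ t s k, ∀ᵐ ω ∂P, |Atil t s k ω| ≤ 1 / (1 - γ))
    -- almost-sure regret bound on the estimated advantages
    (hregret : ∀ᵐ ω ∂P, ∀ s k, ∑ t, Atil t s k ω ≤ B / (1 - γ))
    -- a fixed (deterministic) comparison mixture `q⋆Π` and its value function
    (qstar : S → Fin K → ℝ)
    (hqs0 : ∀ s k, 0 ≤ qstar s k) (hqs1 : ∀ s, ∑ k, qstar s k = 1)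
    (Vstar : S → ℝ)
    (hVstar : ∀ s, Vstar s
      = ∑ a, mixPolicy experts qstar s a * (r s a + γ * ∑ s', T s a s' * Vstar s'))
    (s0 : S)
    (δ : ℝ) (hδ0 : 0 < δ) (hδ1 : δ < 1) :
    ENNReal.ofReal (1 - δ) ≤
      P {ω | Vstar s0 - (1 / (Tn : ℝ)) * ∑ t, V t ω s0
        ≤ ε / (1 - γ) + B / ((1 - γ) ^ 2 * Tn)
          + (1 / (1 - γ) ^ 2) * Real.sqrt (2 * Real.log (1 / δ) / Tn)} := by
  classical
  have hc : 0 < 1 / (1 - γ) := one_div_pos.2 (sub_pos.2 hγ1)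
  obtain ⟨w, hw0, hw1, hpd⟩ :=
    performance_difference hT0 hT1 hexp0 hexp1 hγ0.le hγ1 hqs0 hqs1 hVstar s0
  have hAint : ∀ t s k, Integrable (Atil t s k) P := fun t s k => .of_bound
    ((hAmeas t s k).mono (F.le _)).aestronglyMeasurable _ (by simpa using hAbd t s k)
  set Y : Fin Tn → Ω → ℝ := fun t ω => ∑ p, w p * Atil t p.1 p.2 ω
  have hY : ∀ t, StronglyMeasurable[F (t.val + 1)] (Y t) := fun t =>
    Finset.stronglyMeasurable_fun_sum _ fun p _ => (hAmeas t p.1 p.2).const_mul (w p)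
  have hYc : ∀ t, ∀ᵐ ω ∂P, |Y t ω| ≤ 1 / (1 - γ) := fun t => by
    filter_upwards [ae_all_iff.2 fun p : S × Fin K => hAbd t p.1 p.2] with ω hω
    exact abs_sum_mul_le_of_abs_le hw0 hw1 hω
  refine ofReal_one_sub_le_measure_of_ae
    (measureReal_sum_fin_condExp_sub_ge_sqrt_log_le hY hYc hc hTn hδ0 hδ1.le) ?_
  filter_upwards [ae_all_iff.2 fun t => condExp_sum_mul w (fun p => hAint t p.1 p.2) (F t.val),
    ae_all_iff.2 fun t => ae_all_iff.2 fun s => ae_all_iff.2 (hbias t s), hregret]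
    with ω hlin hbias hreg hgood
  refine sub_mean_le_of_sum_le hTn hγ1 (fun t => ?_) ?_ (not_le.1 hgood)
  · rw [hpd, hlin t]
    exact sum_mul_le_add_of_abs_sub_le hw0 hw1 fun p => hbias t p.1 p.2
  · simp only [Y]
    rw [sum_comm]
    simp only [← mul_sum]
    exact sum_mul_le_of_le hw0 hw1 fun p => hreg p.1 p.2

/-- High-probability control: under a conditional bias bound `ε`, almost-sure boundedness
`|Ã_t(s,k)| ≤ 1/(1−γ)`, and the almost-sure regret bound `max_k ∑_t Ã_t(s,k) ≤ B/(1−γ)`,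
for every fixed state-dependent weight vector `q⋆`, state `s0`, and `δ ∈ (0,1)`, with
probability at least `1−δ`:
`V_{q⋆Π}(s0) − (1/T) ∑_t V_{q_tΠ}(s0)
   ≤ ε/(1−γ) + B/((1−γ)² T) + (1/(1−γ)²)·√(2 ln(1/δ)/T)`. -/
theorem high_probability_control
    {S A : Type*} [Fintype S] [Fintype A] [Nonempty S] [Nonempty A]
    (T : S → A → S → ℝ) (hT0 : ∀ s a s', 0 ≤ T s a s')
    (hT1 : ∀ s a, ∑ s', T s a s' = 1)
    (r : S → A → ℝ) (hr0 : ∀ s a, 0 ≤ r s a) (hr1 : ∀ s a, r s a ≤ 1)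
    (γ : ℝ) (hγ0 : 0 < γ) (hγ1 : γ < 1)
    (K : ℕ) (hK : 2 ≤ K)
    (experts : Fin K → S → A → ℝ)
    (hexp0 : ∀ k s a, 0 ≤ experts k s a)
    (hexp1 : ∀ k s, ∑ a, experts k s a = 1)
    (Tn : ℕ) (hTn : 0 < Tn)
    {Ω : Type*} {mΩ : MeasurableSpace Ω} (P : Measure Ω) [IsProbabilityMeasure P]
    (F : Filtration ℕ mΩ)
    (ε B : ℝ) (hε : 0 ≤ ε) (hB : 0 < B)
    -- the random state-dependent weights `q_t`, with `q_t` being `F_{t-1}`-measurable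
    (q : Fin Tn → Ω → S → Fin K → ℝ)
    (hq0 : ∀ t ω s k, 0 ≤ q t ω s k) (hq1 : ∀ t ω s, ∑ k, q t ω s k = 1)
    (hqmeas : ∀ t s k, StronglyMeasurable[F t.val] (fun ω => q t ω s k))
    -- the (random) value functions of the mixture policies `q_tΠ`
    (V : Fin Tn → Ω → S → ℝ)
    (hV : ∀ t ω s, V t ω s
      = ∑ a, mixPolicy experts (q t ω) s a * (r s a + γ * ∑ s', T s a s' * V t ω s'))
    -- the estimated expert advantages `Ã_t(s,k)`, with `Ã_t` being `F_t`-measurable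
    (Atil : Fin Tn → S → Fin K → Ω → ℝ)
    (hAmeas : ∀ t s k, StronglyMeasurable[F (t.val + 1)] (Atil t s k))
    -- conditional bias at most ε
    (hbias : ∀ t s k, ∀ᵐ ω ∂P,
      |(P[Atil t s k | F t.val]) ω -
        (∑ a, experts k s a *
          ((r s a + γ * ∑ s', T s a s' * V t ω s') - V t ω s))| ≤ ε)
    -- almost-sure boundedness of the estimated advantages
    (hAbd : ∀ t s k, ∀ᵐ ω ∂P, |Atil t s k ω| ≤ 1 / (1 - γ))
    -- almost-sure regret bound on the estimated advantages
    (hregret : ∀ᵐ ω ∂P, ∀ s k, ∑ t, Atil t s k ω ≤ B / (1 - γ))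
    -- a fixed (deterministic) comparison mixture `q⋆Π` and its value function
    (qstar : S → Fin K → ℝ)
    (hqs0 : ∀ s k, 0 ≤ qstar s k) (hqs1 : ∀ s, ∑ k, qstar s k = 1)
    (Vstar : S → ℝ)
    (hVstar : ∀ s, Vstar s
      = ∑ a, mixPolicy experts qstar s a * (r s a + γ * ∑ s', T s a s' * Vstar s'))
    (s0 : S)
    (δ : ℝ) (hδ0 : 0 < δ) (hδ1 : δ < 1) :
    ENNReal.ofReal (1 - δ) ≤
      P {ω | Vstar s0 - (1 / (Tn : ℝ)) * ∑ t, V t ω s0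
        ≤ ε / (1 - γ) + B / ((1 - γ) ^ 2 * Tn)
          + (1 / (1 - γ) ^ 2) * Real.sqrt (2 * Real.log (1 / δ) / Tn)} :=
  high_probability_control_general T hT0 hT1 r γ hγ0 hγ1 K experts hexp0 hexp1 Tn hTn P F ε B V Atil
    hAmeas hbias hAbd hregret qstar hqs0 hqs1 Vstar hVstar s0 δ hδ0 hδ1
end

section
/- (One-step sup-norm contraction of the expected TD bias.) Let I be a nonempty finite set, γ ∈ (0,1), α ∈ (0,1], and Δ ≥ 0. Let W : I×I → ℝ be row-stochastic (W(i,j) ≥ 0 and ∑_{j∈I} W(i,j) = 1 for every i), and let d, p : I → ℝ satisfy 0 ≤ p(i) ≤ 1 and |p(i) − d(i)| ≤ Δ for all i, with d_min := min_{i∈I} d(i) > 0. Given e : I → ℝ, define e'(i) = (1 − α·p(i))·e(i) + α·γ·p(i)·∑_{j∈I} W(i,j)·e(j). Then max_{i∈I} |e'(i)| ≤ (1 − α(1−γ)·d_min + α(1+γ)·Δ) · max_{i∈I} |e(i)|. -/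
open Finset

/-- One-step sup-norm contraction of the expected TD bias: if
`e'(i) = (1 − α p(i)) e(i) + α γ p(i) ∑_j W(i,j) e(j)` with `W` row-stochastic,
`0 ≤ p ≤ 1`, `|p − d| ≤ Δ`, and `d_min = min_i d(i) > 0`, then
`max_i |e'(i)| ≤ (1 − α(1−γ) d_min + α(1+γ) Δ) max_i |e(i)|`. -/
theorem td_bias_one_step_contraction
    {I : Type*} [Fintype I] [Nonempty I]
    (γ α Δ : ℝ) (hγ0 : 0 < γ) (hγ1 : γ < 1) (hα0 : 0 < α) (hα1 : α ≤ 1) (hΔ : 0 ≤ Δ)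
    (W : I → I → ℝ) (hW0 : ∀ i j, 0 ≤ W i j) (hW1 : ∀ i, ∑ j, W i j = 1)
    (d p : I → ℝ) (hp0 : ∀ i, 0 ≤ p i) (hp1 : ∀ i, p i ≤ 1)
    (hpd : ∀ i, |p i - d i| ≤ Δ)
    (dmin : ℝ) (hdmin : dmin = Finset.univ.inf' Finset.univ_nonempty d)
    (hdminpos : 0 < dmin)
    (e e' : I → ℝ)
    (he' : ∀ i, e' i = (1 - α * p i) * e i + α * γ * p i * ∑ j, W i j * e j) :
    (⨆ i, |e' i|)
      ≤ (1 - α * (1 - γ) * dmin + α * (1 + γ) * Δ) * ⨆ i, |e i| := by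

  set M := ⨆ i, |e i| with hM
  have hbdd : BddAbove (Set.range fun i => |e i|) := Set.Finite.bddAbove (Set.finite_range _)
  have hle : ∀ i, |e i| ≤ M := fun i => le_ciSup hbdd i
  have hM0 : 0 ≤ M := le_trans (abs_nonneg _) (hle (Classical.arbitrary I))
  apply ciSup_le
  intro i
  have hsum : |∑ j, W i j * e j| ≤ M := by
    calc |∑ j, W i j * e j| ≤ ∑ j, |W i j * e j| := Finset.abs_sum_le_sum_abs _ _
      _ = ∑ j, W i j * |e j| := by
          apply Finset.sum_congr rfl; intro j _
          rw [abs_mul, abs_of_nonneg (hW0 i j)]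
      _ ≤ ∑ j, W i j * M := Finset.sum_le_sum (fun j _ => mul_le_mul_of_nonneg_left (hle j) (hW0 i j))
      _ = M := by rw [← Finset.sum_mul, hW1 i, one_mul]
  have h1 : 0 ≤ 1 - α * p i := by nlinarith [hp1 i, hp0 i]
  have hpge : dmin - Δ ≤ p i := by
    have h2 : dmin ≤ d i := by
      rw [hdmin]; exact Finset.inf'_le _ (Finset.mem_univ i)
    have h3 := (abs_le.mp (hpd i)).1
    linarith
  have hnn : (0:ℝ) ≤ α * γ * p i := by
    have := hp0 i; positivity
  have key : |e' i| ≤ (1 - α * (1 - γ) * p i) * M := by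
    rw [he' i]
    calc |(1 - α * p i) * e i + α * γ * p i * ∑ j, W i j * e j|
        ≤ |(1 - α * p i) * e i| + |α * γ * p i * ∑ j, W i j * e j| := abs_add_le _ _
      _ = (1 - α * p i) * |e i| + α * γ * p i * |∑ j, W i j * e j| := by
          rw [abs_mul, abs_mul, abs_of_nonneg h1, abs_of_nonneg hnn]
      _ ≤ (1 - α * p i) * M + α * γ * p i * M := by
          exact add_le_add (mul_le_mul_of_nonneg_left (hle i) h1)
            (mul_le_mul_of_nonneg_left hsum hnn)
      _ = (1 - α * (1 - γ) * p i) * M := by ring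
  calc |e' i| ≤ (1 - α * (1 - γ) * p i) * M := key
    _ ≤ (1 - α * (1 - γ) * dmin + α * (1 + γ) * Δ) * M := by
        apply mul_le_mul_of_nonneg_right _ hM0
        have h4 : α * (1 - γ) * (dmin - Δ) ≤ α * (1 - γ) * p i :=
          mul_le_mul_of_nonneg_left hpge (by nlinarith)
        nlinarith [mul_nonneg (mul_nonneg hα0.le hγ0.le) hΔ]
end

section
/- (Bias contraction bound under a stationary policy, deterministic form.) Let I be a nonempty finite set, γ ∈ (0,1), α ∈ (0,1], R ≥ 0, and ρ ∈ (0,1). Let W : I×I → ℝ be row-stochastic (W(i,j) ≥ 0 and ∑_{j} W(i,j) = 1 for all i), and let d : I → ℝ satisfy 0 < d(i) ≤ 1 for all i, with d_min := min_{i∈I} d(i). For each τ ≥ 0 let p_τ : I → ℝ satisfy 0 ≤ p_τ(i) ≤ 1 and |p_τ(i) − d(i)| ≤ 2R·ρ^τ for all i. Suppose the sequence (e_τ)_{τ≥0} of functions I → ℝ satisfies, for all τ and i: e_{τ+1}(i) = (1 − α·p_τ(i))·e_τ(i) + α·γ·p_τ(i)·∑_{j∈I} W(i,j)·e_τ(j).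 Set κ = α(1−γ)·d_min, C = 2αR(1+γ), and E = exp( C / ((1−κ)(1−ρ)) ). Then 0 < κ < 1 and, for every τ ≥ 0: max_{i∈I} |e_τ(i)| ≤ (1−κ)^τ · E · max_{i∈I} |e_0(i)|; in particular max_{i} |e_τ(i)| → 0 geometrically as τ → ∞. -/
open Finset

/-- Bias contraction bound under a stationary policy (deterministic form): if the expected
TD bias evolves as `e_{τ+1}(i) = (1 − α p_τ(i)) e_τ(i) + α γ p_τ(i) ∑_j W(i,j) e_τ(j)` with
`W` row-stochastic, `0 < d ≤ 1`, `0 ≤ p_τ ≤ 1`, and `|p_τ(i) − d(i)| ≤ 2R ρ^τ`, then, for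
`κ = α(1−γ) d_min`, `C = 2αR(1+γ)`, `E = exp(C/((1−κ)(1−ρ)))`, we have `0 < κ < 1` and
`max_i |e_τ(i)| ≤ (1−κ)^τ E max_i |e_0(i)|` for all `τ`; in particular
`max_i |e_τ(i)| → 0` as `τ → ∞`. -/
theorem td_bias_contraction_bound
    {I : Type*} [Fintype I] [Nonempty I]
    (γ α R ρ : ℝ) (hγ0 : 0 < γ) (hγ1 : γ < 1) (hα0 : 0 < α) (hα1 : α ≤ 1)
    (hR : 0 ≤ R) (hρ0 : 0 < ρ) (hρ1 : ρ < 1)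
    (W : I → I → ℝ) (hW0 : ∀ i j, 0 ≤ W i j) (hW1 : ∀ i, ∑ j, W i j = 1)
    (d : I → ℝ) (hd0 : ∀ i, 0 < d i) (hd1 : ∀ i, d i ≤ 1)
    (dmin : ℝ) (hdmin : dmin = Finset.univ.inf' Finset.univ_nonempty d)
    (p : ℕ → I → ℝ) (hp0 : ∀ τ i, 0 ≤ p τ i) (hp1 : ∀ τ i, p τ i ≤ 1)
    (hpd : ∀ τ i, |p τ i - d i| ≤ 2 * R * ρ ^ τ)
    (e : ℕ → I → ℝ)
    (he : ∀ τ i, e (τ + 1) i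
      = (1 - α * p τ i) * e τ i + α * γ * p τ i * ∑ j, W i j * e τ j)
    (κ C E : ℝ)
    (hκ : κ = α * (1 - γ) * dmin)
    (hC : C = 2 * α * R * (1 + γ))
    (hE : E = Real.exp (C / ((1 - κ) * (1 - ρ)))) :
    (0 < κ ∧ κ < 1)
    ∧ (∀ τ : ℕ, (⨆ i, |e τ i|) ≤ (1 - κ) ^ τ * E * ⨆ i, |e 0 i|)
    ∧ Filter.Tendsto (fun τ : ℕ => ⨆ i, |e τ i|) Filter.atTop (nhds 0) := by

  obtain ⟨i0⟩ := (inferInstance : Nonempty I)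
  have hdmin0 : 0 < dmin := by
    rw [hdmin]
    exact (Finset.lt_inf'_iff _).2 (fun i _ => hd0 i)
  have hdmin1 : dmin ≤ 1 := by
    rw [hdmin]
    exact (Finset.inf'_le _ (Finset.mem_univ i0)).trans (hd1 i0)
  have hγ' : 0 < 1 - γ := by linarith
  have hκ0 : 0 < κ := by rw [hκ]; exact mul_pos (mul_pos hα0 hγ') hdmin0
  have hκ1 : κ < 1 := by
    have : α * (1 - γ) * dmin ≤ 1 - γ := by
      nlinarith [mul_nonneg (mul_nonneg (sub_nonneg.2 hα1) hγ'.le) hdmin0.le,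
        mul_nonneg hγ'.le (sub_nonneg.2 hdmin1)]
    rw [hκ]; linarith
  have hκ1' : 0 < 1 - κ := by linarith
  have hC0 : 0 ≤ C := by
    rw [hC]
    exact mul_nonneg (mul_nonneg (mul_nonneg (by norm_num) hα0.le) hR) (by linarith)
  set M : ℕ → ℝ := fun τ => ⨆ i, |e τ i| with hMdef
  have bdd : ∀ τ, BddAbove (Set.range fun i => |e τ i|) :=
    fun τ => (Set.finite_range _).bddAbove
  have hMle : ∀ τ i, |e τ i| ≤ M τ := fun τ i => le_ciSup (bdd τ) i
  have hM0 : ∀ τ, 0 ≤ M τ := fun τ => (abs_nonneg _).trans (hMle τ i0)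
  have step : ∀ τ, M (τ + 1) ≤ ((1 - κ) + C * ρ ^ τ) * M τ := by
    intro τ
    apply ciSup_le
    intro i
    have hsum : |∑ j, W i j * e τ j| ≤ M τ := by
      calc |∑ j, W i j * e τ j| ≤ ∑ j, |W i j * e τ j| := Finset.abs_sum_le_sum_abs _ _
        _ = ∑ j, W i j * |e τ j| := by
            refine Finset.sum_congr rfl fun j _ => ?_
            rw [abs_mul, abs_of_nonneg (hW0 i j)]
        _ ≤ ∑ j, W i j * M τ :=
            Finset.sum_le_sum fun j _ => mul_le_mul_of_nonneg_left (hMle τ j) (hW0 i j)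
        _ = M τ := by rw [← Finset.sum_mul, hW1 i, one_mul]
    have h1 : 0 ≤ 1 - α * p τ i := by nlinarith [hp1 τ i, hp0 τ i]
    have h2 : 0 ≤ α * γ * p τ i := mul_nonneg (mul_nonneg hα0.le hγ0.le) (hp0 τ i)
    have h3 : |e (τ + 1) i| ≤ (1 - α * p τ i) * M τ + α * γ * p τ i * M τ := by
      rw [he τ i]
      calc |(1 - α * p τ i) * e τ i + α * γ * p τ i * ∑ j, W i j * e τ j|
          ≤ |(1 - α * p τ i) * e τ i| + |α * γ * p τ i * ∑ j, W i j * e τ j| := abs_add_le _ _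
        _ = (1 - α * p τ i) * |e τ i| + α * γ * p τ i * |∑ j, W i j * e τ j| := by
            rw [abs_mul, abs_mul, abs_of_nonneg h1, abs_of_nonneg h2]
        _ ≤ (1 - α * p τ i) * M τ + α * γ * p τ i * M τ :=
            add_le_add (mul_le_mul_of_nonneg_left (hMle τ i) h1)
              (mul_le_mul_of_nonneg_left hsum h2)
    have hfac : (1 - α * p τ i) + α * γ * p τ i ≤ (1 - κ) + C * ρ ^ τ := by
      have hdi : dmin ≤ d i := hdmin ▸ Finset.inf'_le _ (Finset.mem_univ i)
      have habs := abs_le.1 (hpd τ i)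
      have hρτ : 0 ≤ ρ ^ τ := pow_nonneg hρ0.le τ
      rw [hκ, hC]
      nlinarith [mul_le_mul_of_nonneg_left (show d i - p τ i ≤ 2 * R * ρ ^ τ by linarith [habs.1])
          (mul_pos hα0 hγ').le, mul_nonneg (mul_nonneg hα0.le hR) hρτ, hγ0.le,
          mul_le_mul_of_nonneg_left hdi (mul_pos hα0 hγ').le]
    calc |e (τ + 1) i| ≤ ((1 - α * p τ i) + α * γ * p τ i) * M τ := by
          rw [add_mul]; exact h3
      _ ≤ ((1 - κ) + C * ρ ^ τ) * M τ := mul_le_mul_of_nonneg_right hfac (hM0 τ)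
  have main : ∀ τ, M τ ≤ (1 - κ) ^ τ *
      Real.exp (C / (1 - κ) * ∑ s ∈ Finset.range τ, ρ ^ s) * M 0 := by
    intro τ
    induction τ with
    | zero => simp
    | succ τ ih =>
      have hone : (1 - κ) + C * ρ ^ τ ≤ (1 - κ) * Real.exp (C / (1 - κ) * ρ ^ τ) := by
        have h := Real.add_one_le_exp (C / (1 - κ) * ρ ^ τ)
        have h2 := mul_le_mul_of_nonneg_left h hκ1'.le
        have h3 : (1 - κ) * (C / (1 - κ) * ρ ^ τ) = C * ρ ^ τ := by
          field_simp
        rw [mul_add, mul_one, h3] at h2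
        linarith
      have hfp : 0 ≤ (1 - κ) + C * ρ ^ τ := by positivity
      calc M (τ + 1) ≤ ((1 - κ) + C * ρ ^ τ) * M τ := step τ
        _ ≤ ((1 - κ) + C * ρ ^ τ) *
            ((1 - κ) ^ τ * Real.exp (C / (1 - κ) * ∑ s ∈ Finset.range τ, ρ ^ s) * M 0) :=
            mul_le_mul_of_nonneg_left ih hfp
        _ ≤ ((1 - κ) * Real.exp (C / (1 - κ) * ρ ^ τ)) *
            ((1 - κ) ^ τ * Real.exp (C / (1 - κ) * ∑ s ∈ Finset.range τ, ρ ^ s) * M 0) := by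
            have := hM0 0
            gcongr
        _ = (1 - κ) ^ (τ + 1) *
            Real.exp (C / (1 - κ) * ∑ s ∈ Finset.range (τ + 1), ρ ^ s) * M 0 := by
            rw [Finset.sum_range_succ, pow_succ, mul_add, Real.exp_add]
            ring
  have hgeom : ∀ τ : ℕ, ∑ s ∈ Finset.range τ, ρ ^ s ≤ 1 / (1 - ρ) := by
    intro τ
    calc ∑ s ∈ Finset.range τ, ρ ^ s
        ≤ ∑' s : ℕ, ρ ^ s := Summable.sum_le_tsum _ (fun i _ => pow_nonneg hρ0.le i)
          (summable_geometric_of_lt_one hρ0.le hρ1)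
      _ = (1 - ρ)⁻¹ := tsum_geometric_of_lt_one hρ0.le hρ1
      _ = 1 / (1 - ρ) := (one_div _).symm
  have bound : ∀ τ : ℕ, M τ ≤ (1 - κ) ^ τ * E * M 0 := by
    intro τ
    refine (main τ).trans ?_
    have hexp : Real.exp (C / (1 - κ) * ∑ s ∈ Finset.range τ, ρ ^ s) ≤ E := by
      rw [hE]
      apply Real.exp_le_exp.2
      have h1 : C / (1 - κ) * ∑ s ∈ Finset.range τ, ρ ^ s ≤ C / (1 - κ) * (1 / (1 - ρ)) :=
        mul_le_mul_of_nonneg_left (hgeom τ) (by positivity)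
      calc C / (1 - κ) * ∑ s ∈ Finset.range τ, ρ ^ s ≤ C / (1 - κ) * (1 / (1 - ρ)) := h1
        _ = C / ((1 - κ) * (1 - ρ)) := by
            field_simp
    exact mul_le_mul_of_nonneg_right (mul_le_mul_of_nonneg_left hexp (by positivity)) (hM0 0)
  refine ⟨⟨hκ0, hκ1⟩, bound, ?_⟩
  have hE0 : 0 < E := hE ▸ Real.exp_pos _
  apply squeeze_zero hM0 (fun τ => (bound τ).trans_eq (mul_assoc _ _ _))
  have ht := tendsto_pow_atTop_nhds_zero_of_lt_one hκ1'.le (show 1 - κ < 1 by linarith)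
  simpa using ht.mul_const (E * M 0)
end
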